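/- arXiv:1101.4739 — 3 statements merged into one kernel-verified Lean document; each statement's English description precedes it below -/
import Mathlib

section
/- Let (E,𝓛,Ē^{0,-}) be a weakly left-resolving labelled space satisfying the standing assumptions, and let 𝔄 be a C*-algebra generated by a representation {s_a, p_A} of (E,𝓛,Ē^{0,-}) such that p_A ≠ 0 for every nonempty A ∈ Ē^{0,-}. If 𝔄 is simple, then (E,𝓛,Ē^{0,-}) is strongly cofinal. -/
open scoped BigOperators

/-- The `n`-fold concatenation power of a word. -/
def wpow {A : Type*} (β : List A) : ℕ → List A
  | 0 => []
  | n + 1 => β ++ wpow β n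

/-- A word is simple if it is not a power of a strictly shorter word. -/
def SimpleWord {A : Type*} (β : List A) : Prop :=
  β ≠ [] ∧ ¬ ∃ (δ : List A) (n : ℕ), δ ≠ [] ∧ δ.length < β.length ∧ 1 ≤ n ∧ β = wpow δ n

/-- The initial segment `x_{[1,N]}` of an infinite word. -/
def finTake {A : Type*} (x : ℕ → A) (N : ℕ) : List A := List.ofFn (fun i : Fin N => x i)

/-- `x = β^∞`, the periodic infinite word with period `β`. -/
def isPowInf {A : Type*} (β : List A) (x : ℕ → A) : Prop :=
  ∃ h : β ≠ [], ∀ n : ℕ,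
    x n = β.get ⟨n % β.length, Nat.mod_lt n (List.length_pos_iff.mpr h)⟩

/-- A labelled graph: a directed graph together with a surjective labelling of edges. -/
structure LabelledGraph (V : Type*) (Ed : Type*) (A : Type*) where
  src : Ed → V
  rng : Ed → V
  lbl : Ed → A
  lbl_surj : Function.Surjective lbl

/-- A finite path (of length ≥ 1) in a directed graph. -/
structure LabelledGraph.GPath {V Ed A : Type*} (G : LabelledGraph V Ed A) where
  edges : List Ed
  ne : edges ≠ []
  chain : edges.Chain' (fun e f => G.rng e = G.src f)

/-- An infinite path in a directed graph. -/
structure LabelledGraph.GInfPath {V Ed A : Type*} (G : LabelledGraph V Ed A) where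
  edges : ℕ → Ed
  chain : ∀ n, G.rng (edges n) = G.src (edges (n + 1))

namespace LabelledGraph

variable {V Ed A : Type*}

def GPath.src {G : LabelledGraph V Ed A} (p : G.GPath) : V := G.src (p.edges.head p.ne)

def GPath.rng {G : LabelledGraph V Ed A} (p : G.GPath) : V := G.rng (p.edges.getLast p.ne)

def GPath.label {G : LabelledGraph V Ed A} (p : G.GPath) : List A := p.edges.map G.lbl

def GPath.len {G : LabelledGraph V Ed A} (p : G.GPath) : ℕ := p.edges.length

def GInfPath.src {G : LabelledGraph V Ed A} (q : G.GInfPath) : V := G.src (q.edges 0)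

def GInfPath.label {G : LabelledGraph V Ed A} (q : G.GInfPath) : ℕ → A :=
  fun n => G.lbl (q.edges n)

variable (G : LabelledGraph V Ed A)

/-- `α ∈ 𝓛(E^{≥1})`: `α` is the label of some finite path. -/
def IsLabelled (α : List A) : Prop := ∃ p : G.GPath, p.label = α

/-- `s(α)`, the set of sources of paths labelled `α`. -/
def srcSet (α : List A) : Set V := { v | ∃ p : G.GPath, p.label = α ∧ p.src = v }

/-- `r(α)`, the set of ranges of paths labelled `α`. -/
def rngSet (α : List A) : Set V := { v | ∃ p : G.GPath, p.label = α ∧ p.rng = v }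

/-- The relative range `r(S,α)` of `α` with respect to `S`. -/
def relRange (S : Set V) (α : List A) : Set V :=
  { v | ∃ p : G.GPath, p.label = α ∧ p.src ∈ S ∧ p.rng = v }

/-- `x ∈ 𝓛(E^∞)`: the infinite word `x` is the label of some infinite path. -/
def IsInfLabelled (x : ℕ → A) : Prop := ∃ q : G.GInfPath, q.label = x

/-- `s(x)` for an infinite labelled path `x`. -/
def infSrc (x : ℕ → A) : Set V := { v | ∃ q : G.GInfPath, q.label = x ∧ q.src = v }

/-- `𝓛(SE^1)`: labels of edges with source in `S`. -/
def labelsFrom (S : Set V) : Set A := { a | ∃ e : Ed, G.src e ∈ S ∧ G.lbl e = a }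

/-- `𝓛(E^1S)`: labels of edges with range in `S`. -/
def labelsInto (S : Set V) : Set A := { a | ∃ e : Ed, G.rng e ∈ S ∧ G.lbl e = a }

/-- `𝓛(SE^n)`: labels of paths of length `n` with source in `S`. -/
def nLabelsFrom (S : Set V) (n : ℕ) : Set (List A) :=
  { α | ∃ p : G.GPath, p.label = α ∧ p.src ∈ S ∧ p.len = n }

/-- `𝓛(E^{≤l}v)`: labels of paths of length at most `l` with range `v`. -/
def labelsToVtx (l : ℕ) (v : V) : Set (List A) :=
  { α | ∃ p : G.GPath, p.label = α ∧ p.len ≤ l ∧ p.rng = v }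

/-- The generalized vertex `[v]_l`. -/
def genVertex (l : ℕ) (v : V) : Set V := { w | G.labelsToVtx l w = G.labelsToVtx l v }

/-- `Ē^{0,-}`: the collection of all finite unions of generalized vertices. -/
def barE : Set (Set V) :=
  { S | ∃ (l : ℕ) (F : Finset V), 1 ≤ l ∧ S = ⋃ v ∈ F, G.genVertex l v }

/-- An accommodating set for `(E,𝓛)`. -/
structure Accommodating (B : Set (Set V)) : Prop where
  empty_mem : ∅ ∈ B
  relRange_mem : ∀ S ∈ B, ∀ α : List A, G.IsLabelled α → G.relRange S α ∈ B
  inter_mem : ∀ S ∈ B, ∀ T ∈ B, S ∩ T ∈ B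
  union_mem : ∀ S ∈ B, ∀ T ∈ B, S ∪ T ∈ B
  rng_mem : ∀ α : List A, G.IsLabelled α → G.rngSet α ∈ B

/-- `𝓔^{0,-}`: the smallest accommodating set for `(E,𝓛)`. -/
def smallestAcc : Set (Set V) :=
  { S | ∀ B : Set (Set V), G.Accommodating B → S ∈ B }

/-- The labelled space `(E,𝓛,B)` is weakly left-resolving. -/
def WeaklyLeftResolving (B : Set (Set V)) : Prop :=
  ∀ S ∈ B, ∀ T ∈ B, ∀ α : List A, G.IsLabelled α →
    G.relRange S α ∩ G.relRange T α = G.relRange (S ∩ T) α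

/-- Standing assumptions: no sinks, set-finite, receiver set-finite, and
edges are determined by source, range and label. -/
structure StandingAssumptions (B : Set (Set V)) : Prop where
  no_sinks : ∀ v : V, ∃ e : Ed, G.src e = v
  set_finite : ∀ S ∈ B, (G.labelsFrom S).Finite
  receiver_set_finite : ∀ S ∈ B, (G.labelsInto S).Finite
  edge_eq : ∀ e f : Ed, G.src e = G.src f → G.rng e = G.rng f → G.lbl e = G.lbl f → e = f

/-- `(E,𝓛,B)` is strongly cofinal. -/
def StronglyCofinal : Prop :=
  ∀ x : ℕ → A, G.IsInfLabelled x → ∀ l : ℕ, 1 ≤ l → ∀ v : V, ∀ w ∈ G.infSrc x,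
    ∃ N : ℕ, 1 ≤ N ∧ ∃ (m : ℕ) (lds : Fin m → List A),
      (∀ i, G.IsLabelled (lds i)) ∧
      G.relRange (G.genVertex 1 w) (finTake x N) ⊆ ⋃ i, G.relRange (G.genVertex l v) (lds i)

/-- `(E,𝓛,B)` is `l`-cofinal. -/
def LCofinal (l : ℕ) : Prop :=
  ∀ x : ℕ → A, G.IsInfLabelled x → ∀ v : V, ∀ w ∈ G.infSrc x,
    ∃ d : ℕ, l ≤ d ∧ ∃ N : ℕ, 1 ≤ N ∧ ∃ (m : ℕ) (lds : Fin m → List A),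
      (∀ i, G.IsLabelled (lds i)) ∧
      G.relRange (G.genVertex d w) (finTake x N) ⊆ ⋃ i, G.relRange (G.genVertex l v) (lds i)

/-- `(E,𝓛,B)` is cofinal: `l`-cofinal for all `l ≥ L`, for some `L > 0`. -/
def Cofinal : Prop := ∃ L : ℕ, 0 < L ∧ ∀ l : ℕ, L ≤ l → G.LCofinal l

/-- `α` is agreeable for `[v]_l` (the condition only involves `l`):
`α = βα' = α'γ` with `|β| = |γ| ≤ l`. -/
def Agreeable (l : ℕ) (α : List A) : Prop :=
  ∃ β α' γ : List A, G.IsLabelled β ∧ G.IsLabelled α' ∧ G.IsLabelled γ ∧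
    β.length = γ.length ∧ β.length ≤ l ∧ α = β ++ α' ∧ α = α' ++ γ

/-- `α` (a labelled path with `s(α) ∩ [v]_l ≠ ∅`) is disagreeable for `[v]_l`. -/
def DisagreeablePath (l : ℕ) (v : V) (α : List A) : Prop :=
  G.IsLabelled α ∧ (G.srcSet α ∩ G.genVertex l v).Nonempty ∧ ¬ G.Agreeable l α

/-- The generalized vertex `[v]_l` is disagreeable. -/
def DisagreeableVtx (l : ℕ) (v : V) : Prop :=
  ∃ N : ℕ, 0 < N ∧ ∀ n : ℕ, N < n →
    ∃ α : List A, n ≤ α.length ∧ G.DisagreeablePath l v α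

/-- The labelled space is disagreeable. -/
def DisagreeableSpace : Prop :=
  ∀ v : V, ∃ L : ℕ, 0 < L ∧ ∀ l : ℕ, L < l → G.DisagreeableVtx l v

/-- A representation of the labelled space `(E,𝓛,B)` in a C*-algebra `𝔄`. -/
structure Rep (B : Set (Set V)) (𝔄 : Type*) [NonUnitalCStarAlgebra 𝔄] where
  p : Set V → 𝔄
  s : A → 𝔄
  p_empty : p ∅ = 0
  p_proj : ∀ S ∈ B, star (p S) = p S ∧ p S * p S = p S
  s_pisom : ∀ a : A, s a * star (s a) * s a = s a
  p_inter : ∀ S ∈ B, ∀ T ∈ B, p (S ∩ T) = p S * p T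
  p_union : ∀ S ∈ B, ∀ T ∈ B, p (S ∪ T) = p S + p T - p (S ∩ T)
  p_s : ∀ S ∈ B, ∀ a : A, p S * s a = s a * p (G.relRange S [a])
  s_star_s : ∀ a : A, star (s a) * s a = p (G.rngSet [a])
  s_orth : ∀ a b : A, a ≠ b → star (s a) * s b = 0
  p_sum : ∀ S ∈ B, ∀ h : (G.labelsFrom S).Finite, (G.labelsFrom S).Nonempty →
    p S = ∑ a ∈ h.toFinset, s a * p (G.relRange S [a]) * star (s a)

variable {G}

/-- `s_α = s_{α_1} ⋯ s_{α_n}` for a word `α`. -/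
def Rep.sWord {B : Set (Set V)} {𝔄 : Type*} [NonUnitalCStarAlgebra 𝔄]
    (ρ : G.Rep B 𝔄) : List A → 𝔄
  | [] => 0
  | a :: rest => rest.foldl (fun x b => x * ρ.s b) (ρ.s a)

/-- The C*-algebra `𝔄` is generated by the representation `ρ`. -/
def Rep.Generates {B : Set (Set V)} {𝔄 : Type*} [NonUnitalCStarAlgebra 𝔄]
    (ρ : G.Rep B 𝔄) : Prop :=
  closure (↑(NonUnitalStarAlgebra.adjoin ℂ
    (Set.range ρ.s ∪ ρ.p '' B)) : Set 𝔄) = Set.univ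

/-- The representation `ρ` is universal. -/
def Rep.Universal {B : Set (Set V)} {𝔄 : Type*} [NonUnitalCStarAlgebra 𝔄]
    (ρ : G.Rep B 𝔄) : Prop :=
  ∀ (C : Type*) [NonUnitalCStarAlgebra C], ∀ ρ' : G.Rep B C,
    ∃ φ : 𝔄 →⋆ₙₐ[ℂ] C, (∀ a : A, φ (ρ.s a) = ρ'.s a) ∧ ∀ S ∈ B, φ (ρ.p S) = ρ'.p S

end LabelledGraph

/-- A C*-algebra is simple if its only closed two-sided ideals are `{0}` and the
whole algebra. -/
def IsSimpleCStarAlgebra (𝔄 : Type*) [NonUnitalCStarAlgebra 𝔄] : Prop :=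
  ∀ I : TwoSidedIdeal 𝔄, IsClosed (I : Set 𝔄) →
    (I : Set 𝔄) = {0} ∨ (I : Set 𝔄) = Set.univ

/-!
Suppose strong cofinality fails at `x`, `l`, `v`, `w`, and put `C = [v]_l`. The closed linear span
of the monomials `s_α p_S s_β^*` whose `S` is covered by finitely many relative ranges of `C` is a
closed two-sided ideal containing `p_C ≠ 0`, hence everything, so some `y` in the span satisfies
`‖p_{[w]_1} - y‖ < 1`. Let `μ` be an initial segment of `x` longer than every `α` occurring in `y`.
Failure of strong cofinality yields a vertex `t ∈ r([w]_1, μ)` outside the finitely many ranges of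
`C` that the monomials of `y` reach after reading `μ`; since sets in `Ē^{0,-}` are unions of
generalized vertices of every large level, some generalized vertex `D ∋ t` lies inside
`r([w]_1, μ)` and avoids all those ranges. Compressing by `s_μ p_D` sends `p_{[w]_1}` to `p_D` and
`y` to `0`, so `1 = ‖p_D‖ ≤ ‖p_{[w]_1} - y‖ < 1`.
-/

theorem TwoSidedIdeal.exists_coe_eq_closure {R : Type*} [NonUnitalRing R] [StarRing R]
    [TopologicalSpace R] [IsTopologicalRing R] [ContinuousStar R] {X : Set R} (hX : Dense X)
    (M : AddSubgroup R) (hstar : ∀ y ∈ M, star y ∈ M) (hmul : ∀ x ∈ X, ∀ y ∈ M, x * y ∈ M) :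
    ∃ I : TwoSidedIdeal R, (I : Set R) = closure M := by
  have hmul_left : ∀ {x y : R}, y ∈ closure (M : Set R) → x * y ∈ closure (M : Set R) :=
    fun hy => map_mem_closure₂ continuous_mul (hX _) hy hmul
  have hstar' : ∀ {y : R}, y ∈ closure (M : Set R) → star y ∈ closure (M : Set R) :=
    fun hy => map_mem_closure continuous_star hy hstar
  refine ⟨TwoSidedIdeal.mk' (closure M) (subset_closure M.zero_mem)
    (fun hx hy => map_mem_closure₂ continuous_add hx hy fun _ ha _ hb => M.add_mem ha hb)
    (fun hx => map_mem_closure continuous_neg hx fun _ ha => M.neg_mem ha) hmul_left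
    (fun {x y} hx => ?_), TwoSidedIdeal.coe_mk' ..⟩
  simpa using hstar' (hmul_left (x := star y) (hstar' hx))

namespace LabelledGraph

variable {V Ed A : Type*} {G : LabelledGraph V Ed A}

section Paths

def GPath.single (G : LabelledGraph V Ed A) (e : Ed) : G.GPath :=
  ⟨[e], List.cons_ne_nil _ _, List.isChain_singleton _⟩

def GPath.cons (e : Ed) (p : G.GPath) (h : G.rng e = p.src) : G.GPath :=
  ⟨e :: p.edges, List.cons_ne_nil _ _, List.isChain_cons.mpr ⟨fun y hy => by
    rw [h, Option.some_injective _ (hy.symm.trans (List.head?_eq_some_head p.ne))]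
    rfl, p.chain⟩⟩

lemma GPath.cons_rng (e : Ed) (p : G.GPath) (h : G.rng e = p.src) :
    (GPath.cons e p h).rng = p.rng :=
  congrArg G.rng (List.getLast_cons p.ne)

lemma GPath.exists_eq_cons (p : G.GPath) {a : A} {γ : List A} (hlab : p.label = a :: γ)
    (hγ : γ ≠ []) :
    ∃ (e : Ed) (q : G.GPath), G.lbl e = a ∧ q.label = γ ∧ G.rng e = q.src ∧
      p.src = G.src e ∧ p.rng = q.rng := by
  obtain ⟨_ | ⟨e, _ | ⟨f, es⟩⟩, ne, ch⟩ := p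
  · exact absurd rfl ne
  · simp only [GPath.label, List.map_cons, List.map_nil, List.cons.injEq] at hlab
    exact absurd hlab.2.symm hγ
  simp only [GPath.label, List.map_cons, List.cons.injEq] at hlab
  have ch := List.isChain_cons.mp ch
  exact ⟨e, ⟨f :: es, List.cons_ne_nil _ _, ch.2⟩, hlab.1, by simpa [GPath.label] using hlab.2,
    ch.1 f rfl, rfl, congrArg G.rng (List.getLast_cons (List.cons_ne_nil _ _))⟩

lemma GPath.exists_eq_single (p : G.GPath) {a : A} (h : p.label = [a]) :
    ∃ e, G.lbl e = a ∧ p.src = G.src e ∧ p.rng = G.rng e := by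
  obtain ⟨_ | ⟨e, _ | ⟨f, es⟩⟩, ne, ch⟩ := p
  · exact absurd rfl ne
  · simp only [GPath.label, List.map_cons, List.map_nil, List.cons.injEq] at h
    exact ⟨e, h.1, rfl, rfl⟩
  · simp [GPath.label] at h

end Paths

section Ranges

variable (G)

lemma isLabelled_single (a : A) : G.IsLabelled [a] :=
  ⟨GPath.single G (G.lbl_surj a).choose, congrArg (· :: []) (G.lbl_surj a).choose_spec⟩

lemma isLabelled_of_relRange_nonempty {S : Set V} {α : List A}
    (h : (G.relRange S α).Nonempty) : G.IsLabelled α :=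
  let ⟨_, p, hp, _⟩ := h
  ⟨p, hp⟩

lemma relRange_mono {S T : Set V} (h : S ⊆ T) (α : List A) :
    G.relRange S α ⊆ G.relRange T α :=
  fun _ ⟨p, h1, h2, h3⟩ => ⟨p, h1, h h2, h3⟩

lemma relRange_iUnion {ι : Sort*} (S : ι → Set V) (α : List A) :
    G.relRange (⋃ i, S i) α = ⋃ i, G.relRange (S i) α := by
  ext v
  simp only [relRange, Set.mem_iUnion, Set.mem_ofPred_eq]
  constructor
  · rintro ⟨p, h1, ⟨i, h2⟩, h3⟩
    exact ⟨i, p, h1, h2, h3⟩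
  · rintro ⟨i, p, h1, h2, h3⟩
    exact ⟨p, h1, ⟨i, h2⟩, h3⟩

lemma relRange_subset_rngSet (S : Set V) (α : List A) : G.relRange S α ⊆ G.rngSet α :=
  fun _ ⟨p, h1, _, h3⟩ => ⟨p, h1, h3⟩

lemma relRange_cons (S : Set V) (a : A) {γ : List A} (hγ : γ ≠ []) :
    G.relRange S (a :: γ) = G.relRange (G.relRange S [a]) γ := by
  ext v
  constructor
  · rintro ⟨p, hlab, hsrc, rfl⟩
    obtain ⟨e, q, he, hq, hlink, hps, hpr⟩ := p.exists_eq_cons hlab hγ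
    exact ⟨q, hq, ⟨GPath.single G e, by simp [GPath.single, GPath.label, he],
      (hps ▸ hsrc : G.src e ∈ S), hlink⟩, hpr.symm⟩
  · rintro ⟨q, hq, ⟨p, hp, hsrc, hrng⟩, rfl⟩
    obtain ⟨e, he, hs, hr⟩ := p.exists_eq_single hp
    exact ⟨GPath.cons e q (hr ▸ hrng), by simp [GPath.cons, GPath.label, he, ← hq],
      (hs ▸ hsrc : G.src e ∈ S), GPath.cons_rng _ _ _⟩

/-- The relative range `r(S, α)` with the convention `r(S, []) = S` (whereas `relRange S []`
is empty). -/
def relRange' (G : LabelledGraph V Ed A) (S : Set V) : List A → Set V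
  | [] => S
  | a :: α => G.relRange' (G.relRange S [a]) α

lemma relRange'_append (S : Set V) (α β : List A) :
    G.relRange' S (α ++ β) = G.relRange' (G.relRange' S α) β := by
  induction α generalizing S with
  | nil => rfl
  | cons a α ih => exact ih _

lemma relRange'_eq_relRange (S : Set V) {α : List A} (hα : α ≠ []) :
    G.relRange' S α = G.relRange S α := by
  induction α generalizing S with
  | nil => exact absurd rfl hα
  | cons a γ ih =>
    rcases eq_or_ne γ [] with rfl | hγ
    · rfl
    · rw [relRange', ih _ hγ, relRange_cons G S a hγ]

lemma relRange'_mono {S T : Set V} (h : S ⊆ T) (α : List A) :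
    G.relRange' S α ⊆ G.relRange' T α := by
  induction α generalizing S T with
  | nil => exact h
  | cons a α ih => exact ih (G.relRange_mono h [a])

lemma relRange'_iUnion {ι : Sort*} (S : ι → Set V) (α : List A) :
    G.relRange' (⋃ i, S i) α = ⋃ i, G.relRange' (S i) α := by
  induction α generalizing S with
  | nil => rfl
  | cons a α ih => rw [relRange', relRange_iUnion, ih]; rfl

lemma relRange'_subset_biUnion {C S : Set V} {L : Set (List A)}
    (hS : S ⊆ ⋃ δ ∈ L, G.relRange' C δ) (η : List A) :
    G.relRange' S η ⊆ ⋃ δ ∈ L, G.relRange' C (δ ++ η) := by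
  refine (G.relRange'_mono hS η).trans ?_
  simp only [relRange'_iUnion, relRange'_append, subset_refl]

def CoveredByRanges (G : LabelledGraph V Ed A) (C S : Set V) : Prop :=
  ∃ L : Set (List A), L.Finite ∧ S ⊆ ⋃ δ ∈ L, G.relRange' C δ

lemma coveredByRanges_self (C : Set V) : G.CoveredByRanges C C :=
  ⟨{[]}, Set.finite_singleton _, by simp [relRange']⟩

variable {G}

lemma CoveredByRanges.mono {C S T : Set V} (h : G.CoveredByRanges C S) (hTS : T ⊆ S) :
    G.CoveredByRanges C T :=
  let ⟨L, hL, hS⟩ := h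
  ⟨L, hL, hTS.trans hS⟩

lemma CoveredByRanges.relRange' {C S : Set V} (h : G.CoveredByRanges C S) (η : List A) :
    G.CoveredByRanges C (G.relRange' S η) := by
  obtain ⟨L, hL, hS⟩ := h
  refine ⟨(· ++ η) '' L, hL.image _, (G.relRange'_subset_biUnion hS η).trans ?_⟩
  simp only [Set.biUnion_image, subset_refl]

lemma exists_fin_labelled_cover (C : Set V) {Δ : Set (List A)} (hΔ : Δ.Finite) :
    ∃ (m : ℕ) (lds : Fin m → List A), (∀ i, G.IsLabelled (lds i)) ∧
      ⋃ η ∈ Δ, G.relRange C η ⊆ ⋃ i, G.relRange C (lds i) := by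
  obtain ⟨m, lds, -, hrange⟩ := (hΔ.subset (Set.sep_subset Δ G.IsLabelled)).fin_param
  refine ⟨m, lds, fun i => (hrange ▸ Set.mem_range_self i : lds i ∈ {η ∈ Δ | G.IsLabelled η}).2, ?_⟩
  simp only [Set.iUnion_subset_iff]
  intro η hη t ht
  obtain ⟨i, rfl⟩ : η ∈ Set.range lds := hrange ▸ ⟨hη, G.isLabelled_of_relRange_nonempty ⟨t, ht⟩⟩
  exact Set.mem_iUnion_of_mem i ht

end Ranges

section Accommodating

variable {B : Set (Set V)}

lemma Accommodating.relRange_mem' (hB : G.Accommodating B) {S : Set V} (hS : S ∈ B)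
    (α : List A) : G.relRange S α ∈ B := by
  rcases (G.relRange S α).eq_empty_or_nonempty with h | h
  · exact h ▸ hB.empty_mem
  · exact hB.relRange_mem S hS α (G.isLabelled_of_relRange_nonempty h)

lemma Accommodating.relRange'_mem (hB : G.Accommodating B) {S : Set V} (hS : S ∈ B)
    (α : List A) : G.relRange' S α ∈ B := by
  induction α generalizing S with
  | nil => exact hS
  | cons a α ih => exact ih (hB.relRange_mem' hS [a])

lemma Accommodating.rngSet_single_mem (hB : G.Accommodating B) (a : A) : G.rngSet [a] ∈ B :=
  hB.rng_mem [a] (G.isLabelled_single a)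

lemma Accommodating.biUnion_mem (hB : G.Accommodating B) {ι : Type*} {s : Set ι}
    (hs : s.Finite) {S : ι → Set V} (hS : ∀ i ∈ s, S i ∈ B) : ⋃ i ∈ s, S i ∈ B := by
  induction s, hs using Set.Finite.induction_on with
  | empty => simpa using hB.empty_mem
  | @insert i s _ _ ih =>
    rw [Set.biUnion_insert]
    exact hB.union_mem _ (hS i (Set.mem_insert i s)) _
      (ih fun j hj => hS j (Set.mem_insert_of_mem i hj))

end Accommodating

section GeneralizedVertices

variable (G)

lemma genVertex_mem_barE {l : ℕ} (hl : 1 ≤ l) (v : V) : G.genVertex l v ∈ G.barE :=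
  ⟨l, {v}, hl, by simp⟩

lemma labelsToVtx_eq_sep {j k : ℕ} (hjk : j ≤ k) (u : V) :
    G.labelsToVtx j u = {α ∈ G.labelsToVtx k u | α.length ≤ j} := by
  ext α
  constructor
  · rintro ⟨p, rfl, hp, hr⟩
    exact ⟨⟨p, rfl, hp.trans hjk, hr⟩, by simpa [GPath.label, GPath.len] using hp⟩
  · rintro ⟨⟨p, rfl, -, hr⟩, hp⟩
    exact ⟨p, rfl, by simpa [GPath.label, GPath.len] using hp, hr⟩

lemma genVertex_anti {j k : ℕ} (hjk : j ≤ k) (t : V) : G.genVertex k t ⊆ G.genVertex j t :=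
  fun u hu => by
    simp only [genVertex, Set.mem_ofPred_eq] at hu ⊢
    rw [G.labelsToVtx_eq_sep hjk, G.labelsToVtx_eq_sep hjk t, hu]

lemma exists_saturated_of_mem_barE {S : Set V} (hS : S ∈ G.barE) :
    ∃ l, 1 ≤ l ∧ ∀ k, l ≤ k → ∀ {t u : V}, u ∈ G.genVertex k t → (u ∈ S ↔ t ∈ S) := by
  obtain ⟨l, F, hl, rfl⟩ := hS
  refine ⟨l, hl, fun k hk t u hu => ?_⟩
  have hu' : G.labelsToVtx l u = G.labelsToVtx l t := G.genVertex_anti hk t hu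
  simp only [Set.mem_iUnion, genVertex, Set.mem_ofPred_eq, hu']

lemma exists_genVertex_subset_disjoint {S T : Set V} (hS : S ∈ G.barE) (hT : T ∈ G.barE)
    {t : V} (htS : t ∈ S) (htT : t ∉ T) :
    ∃ k, 1 ≤ k ∧ G.genVertex k t ⊆ S ∧ Disjoint (G.genVertex k t) T := by
  obtain ⟨l, hl, hsatS⟩ := G.exists_saturated_of_mem_barE hS
  obtain ⟨l', -, hsatT⟩ := G.exists_saturated_of_mem_barE hT
  refine ⟨max l l', hl.trans (le_max_left _ _),
    fun u hu => (hsatS _ (le_max_left _ _) hu).2 htS,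
    Set.disjoint_left.mpr fun u hu huT => htT ((hsatT _ (le_max_right _ _) hu).1 huT)⟩

end GeneralizedVertices

namespace Rep

variable {B : Set (Set V)} {𝔄 : Type*} [NonUnitalCStarAlgebra 𝔄] (ρ : G.Rep B 𝔄)

/-- `ρ.wordMul α z = s_α z`, with `s_[] z = z` (whereas `ρ.sWord [] = 0`). -/
def wordMul : List A → 𝔄 → 𝔄
  | [], z => z
  | a :: α, z => ρ.s a * wordMul α z

/-- The monomial `s_α p_S s_β^*`. -/
def monomial (α β : List A) (S : Set V) : 𝔄 :=
  ρ.wordMul α (star (ρ.wordMul β (ρ.p S)))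

lemma wordMul_mul (α : List A) (z y : 𝔄) : ρ.wordMul α z * y = ρ.wordMul α (z * y) := by
  induction α with
  | nil => rfl
  | cons a α ih => rw [wordMul, mul_assoc, ih]; rfl

lemma wordMul_append (α β : List A) (z : 𝔄) :
    ρ.wordMul (α ++ β) z = ρ.wordMul α (ρ.wordMul β z) := by
  induction α with
  | nil => rfl
  | cons a α ih => rw [List.cons_append, wordMul, ih]; rfl

lemma wordMul_zero (α : List A) : ρ.wordMul α 0 = 0 := by
  induction α with
  | nil => rfl
  | cons a α ih => rw [wordMul, ih, mul_zero]

lemma isStarProjection_p {S : Set V} (hS : S ∈ B) : IsStarProjection (ρ.p S) :=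
  ⟨(ρ.p_proj S hS).2, (ρ.p_proj S hS).1⟩

lemma p_mul_p {S T : Set V} (hS : S ∈ B) (hT : T ∈ B) : ρ.p S * ρ.p T = ρ.p (S ∩ T) :=
  (ρ.p_inter S hS T hT).symm

lemma norm_p_eq_one {S : Set V} (hS : S ∈ B) (h : ρ.p S ≠ 0) : ‖ρ.p S‖ = 1 := by
  have hsq : ‖ρ.p S‖ * ‖ρ.p S‖ = ‖ρ.p S‖ := by
    rw [← CStarRing.norm_star_mul_self, (ρ.p_proj S hS).1, (ρ.p_proj S hS).2]
  exact mul_left_cancel₀ (norm_ne_zero_iff.mpr h) (hsq.trans (mul_one _).symm)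

lemma norm_wordMul_le (hB : G.Accommodating B) (α : List A) (z : 𝔄) :
    ‖ρ.wordMul α z‖ ≤ ‖z‖ := by
  induction α with
  | nil => exact le_rfl
  | cons a α ih =>
    have hsq : ‖ρ.s a‖ * ‖ρ.s a‖ ≤ 1 := by
      rw [← CStarRing.norm_star_mul_self, ρ.s_star_s]
      exact (ρ.isStarProjection_p (hB.rngSet_single_mem a)).norm_le
    have hs : ‖ρ.s a‖ ≤ 1 := by nlinarith [norm_nonneg (ρ.s a)]
    calc ‖ρ.s a * ρ.wordMul α z‖ ≤ ‖ρ.s a‖ * ‖ρ.wordMul α z‖ := norm_mul_le _ _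
      _ ≤ 1 * ‖z‖ := by gcongr
      _ = ‖z‖ := one_mul _

lemma p_mul_wordMul (hB : G.Accommodating B) {S : Set V} (hS : S ∈ B) (α : List A) (z : 𝔄) :
    ρ.p S * ρ.wordMul α z = ρ.wordMul α (ρ.p (G.relRange' S α) * z) := by
  induction α generalizing S with
  | nil => rfl
  | cons a α ih =>
    rw [wordMul, ← mul_assoc, ρ.p_s S hS a, mul_assoc, ih (hB.relRange_mem' hS [a])]
    rfl

lemma star_s_mul_p_mul_s (hB : G.Accommodating B) {S : Set V} (hS : S ∈ B) (a : A) :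
    star (ρ.s a) * ρ.p S * ρ.s a = ρ.p (G.relRange S [a]) := by
  rw [mul_assoc, ρ.p_s S hS a, ← mul_assoc, ρ.s_star_s,
    ρ.p_mul_p (hB.rngSet_single_mem a) (hB.relRange_mem' hS [a]),
    Set.inter_eq_self_of_subset_right (G.relRange_subset_rngSet S [a])]

lemma star_wordMul_mul_p_mul_wordMul (hB : G.Accommodating B) {S D : Set V} (hS : S ∈ B)
    (hD : D ∈ B) {μ : List A} (hDS : D ⊆ G.relRange' S μ) :
    star (ρ.wordMul μ (ρ.p D)) * ρ.p S * ρ.wordMul μ (ρ.p D) = ρ.p D := by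
  induction μ generalizing S with
  | nil =>
    change star (ρ.p D) * ρ.p S * ρ.p D = ρ.p D
    rw [(ρ.p_proj D hD).1, ρ.p_mul_p hD hS, ρ.p_mul_p (hB.inter_mem _ hD _ hS) hD,
      Set.inter_eq_self_of_subset_left Set.inter_subset_left,
      Set.inter_eq_self_of_subset_left (s := D) (t := S) hDS]
  | cons a μ ih =>
    calc star (ρ.s a * ρ.wordMul μ (ρ.p D)) * ρ.p S * (ρ.s a * ρ.wordMul μ (ρ.p D))
        = star (ρ.wordMul μ (ρ.p D)) * (star (ρ.s a) * ρ.p S * ρ.s a)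
            * ρ.wordMul μ (ρ.p D) := by simp only [star_mul, mul_assoc]
      _ = ρ.p D := by rw [ρ.star_s_mul_p_mul_s hB hS a, ih (hB.relRange_mem' hS [a]) hDS]

lemma star_wordMul_mul_wordMul_of_take_ne (hB : G.Accommodating B) {α μ : List A}
    (hlen : α.length ≤ μ.length) (hne : μ.take α.length ≠ α) (w z : 𝔄) :
    star (ρ.wordMul μ w) * ρ.wordMul α z = 0 := by
  induction α generalizing μ z with
  | nil => exact absurd rfl hne
  | cons a α ih =>
    obtain _ | ⟨c, μ⟩ := μ
    · exact absurd hlen (by simp)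
    have hsplit : star (ρ.wordMul (c :: μ) w) * ρ.wordMul (a :: α) z
        = star (ρ.wordMul μ w) * (star (ρ.s c) * ρ.s a) * ρ.wordMul α z := by
      simp only [wordMul, star_mul, mul_assoc]
    rcases eq_or_ne c a with rfl | hca
    · rw [hsplit, ρ.s_star_s, mul_assoc, ρ.p_mul_wordMul hB (hB.rngSet_single_mem c)]
      exact ih (by simpa using hlen) (by simpa using hne) _
    · rw [hsplit, ρ.s_orth c a hca, mul_zero, zero_mul]

lemma star_wordMul_append_mul_wordMul (hB : G.Accommodating B) {S D : Set V} (hS : S ∈ B)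
    (hD : D ∈ B) {μ : List A} (hdisj : Disjoint D (G.relRange' S μ)) (α : List A) (z : 𝔄) :
    star (ρ.wordMul (α ++ μ) (ρ.p D)) * ρ.wordMul α (ρ.p S * z) = 0 := by
  induction α generalizing S with
  | nil =>
    change star (ρ.wordMul μ (ρ.p D)) * (ρ.p S * z) = 0
    rw [← mul_assoc, ← (ρ.p_proj S hS).1, ← star_mul, ρ.p_mul_wordMul hB hS,
      ρ.p_mul_p (hB.relRange'_mem hS μ) hD, Set.disjoint_iff_inter_eq_empty.mp hdisj.symm,
      ρ.p_empty, ρ.wordMul_zero, star_zero, zero_mul]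
  | cons a α ih =>
    have hT := hB.relRange'_mem (hB.rngSet_single_mem a) α
    calc star (ρ.wordMul (a :: α ++ μ) (ρ.p D)) * ρ.wordMul (a :: α) (ρ.p S * z)
        = star (ρ.wordMul (α ++ μ) (ρ.p D))
            * (ρ.p (G.rngSet [a]) * ρ.wordMul α (ρ.p S * z)) := by
          simp only [List.cons_append, wordMul, star_mul, mul_assoc, ← ρ.s_star_s a]
      _ = star (ρ.wordMul (α ++ μ) (ρ.p D))
            * ρ.wordMul α (ρ.p (G.relRange' (G.rngSet [a]) α ∩ S) * z) := by
          rw [ρ.p_mul_wordMul hB (hB.rngSet_single_mem a), ← mul_assoc, ρ.p_mul_p hT hS]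
      _ = 0 := ih (hB.inter_mem _ hT _ hS)
          (hdisj.mono_right (G.relRange'_mono Set.inter_subset_right μ))

lemma p_mul_star_wordMul_p {S : Set V} (hS : S ∈ B) (β : List A) :
    ρ.p S * star (ρ.wordMul β (ρ.p S)) = star (ρ.wordMul β (ρ.p S)) := by
  rw [← (ρ.p_proj S hS).1, ← star_mul, (ρ.p_proj S hS).1, ρ.wordMul_mul, (ρ.p_proj S hS).2]

lemma monomial_eq_mul {S : Set V} (hS : S ∈ B) (α β : List A) :
    ρ.monomial α β S = ρ.wordMul α (ρ.p S) * star (ρ.wordMul β (ρ.p S)) := by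
  rw [ρ.wordMul_mul, ρ.p_mul_star_wordMul_p hS]
  rfl

lemma star_monomial {S : Set V} (hS : S ∈ B) (α β : List A) :
    star (ρ.monomial α β S) = ρ.monomial β α S := by
  rw [ρ.monomial_eq_mul hS, ρ.monomial_eq_mul hS, star_mul, star_star]

lemma p_mul_monomial (hB : G.Accommodating B) {S T : Set V} (hS : S ∈ B) (hT : T ∈ B)
    (α β : List A) : ρ.p T * ρ.monomial α β S = ρ.monomial α β (S ∩ G.relRange' T α) := by
  have hT' := hB.relRange'_mem hT α
  rw [monomial, ρ.p_mul_wordMul hB hT, ← (ρ.p_proj _ hT').1, ← star_mul, ρ.wordMul_mul,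
    ρ.p_mul_p hS hT']
  rfl

lemma star_s_mul_monomial_nil {S : Set V} (hS : S ∈ B) (a : A)
    (β : List A) :
    star (ρ.s a) * ρ.monomial [] β S = ρ.monomial [] (β ++ [a]) (G.relRange S [a]) := by
  change star (ρ.s a) * star (ρ.wordMul β (ρ.p S)) = star (ρ.wordMul (β ++ [a]) _)
  rw [← star_mul, ρ.wordMul_mul, ρ.p_s S hS a, ρ.wordMul_append]
  rfl

lemma star_wordMul_mul_monomial (hB : G.Accommodating B) {S D : Set V} (hS : S ∈ B)
    (hD : D ∈ B) {α μ : List A} (hlen : α.length ≤ μ.length)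
    (hdisj : Disjoint D (G.relRange' S (μ.drop α.length))) (β : List A) :
    star (ρ.wordMul μ (ρ.p D)) * ρ.monomial α β S = 0 := by
  by_cases hpre : μ.take α.length = α
  · rw [monomial, ← ρ.p_mul_star_wordMul_p hS, ← List.take_append_drop α.length μ, hpre]
    exact ρ.star_wordMul_append_mul_wordMul hB hS hD (hpre ▸ hdisj) α _
  · exact ρ.star_wordMul_mul_wordMul_of_take_ne hB hlen hpre _ _

def monomials (C : Set V) : Set 𝔄 :=
  {z | ∃ α β S, S ∈ B ∧ G.CoveredByRanges C S ∧ z = ρ.monomial α β S}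

def monomialSpan (C : Set V) : Submodule ℂ 𝔄 := Submodule.span ℂ (ρ.monomials C)

variable {ρ} {C : Set V}

lemma star_mem_monomialSpan {y : 𝔄} (hy : y ∈ ρ.monomialSpan C) :
    star y ∈ ρ.monomialSpan C := by
  induction hy using Submodule.span_induction with
  | mem z hz =>
    obtain ⟨α, β, S, hS, hSC, rfl⟩ := hz
    exact Submodule.subset_span ⟨β, α, S, hS, hSC, ρ.star_monomial hS α β⟩
  | zero => rw [star_zero]; exact Submodule.zero_mem _
  | add x y _ _ hx hy => simpa using Submodule.add_mem _ hx hy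
  | smul c x _ hx => simpa using Submodule.smul_mem _ (star c) hx

lemma star_s_mul_mem_monomialSpan (hB : G.Accommodating B) (a : A) {z : 𝔄}
    (hz : z ∈ ρ.monomials C) : star (ρ.s a) * z ∈ ρ.monomialSpan C := by
  obtain ⟨_ | ⟨b, α⟩, β, S, hS, hSC, rfl⟩ := hz
  · rw [ρ.star_s_mul_monomial_nil hS]
    exact Submodule.subset_span
      ⟨[], β ++ [a], _, hB.relRange_mem' hS [a], hSC.relRange' [a], rfl⟩
  · change star (ρ.s a) * (ρ.s b * ρ.monomial α β S) ∈ _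
    rcases eq_or_ne a b with rfl | hab
    · rw [← mul_assoc, ρ.s_star_s, ρ.p_mul_monomial hB hS (hB.rngSet_single_mem a)]
      exact Submodule.subset_span ⟨α, β, _, hB.inter_mem _ hS _ (hB.relRange'_mem
        (hB.rngSet_single_mem a) α), hSC.mono Set.inter_subset_left, rfl⟩
    · rw [← mul_assoc, ρ.s_orth a b hab, zero_mul]
      exact Submodule.zero_mem _

lemma mul_mem_monomialSpan_of_mem_monomials (hB : G.Accommodating B) {g z : 𝔄}
    (hg : g ∈ (Set.range ρ.s ∪ ρ.p '' B) ∪ star (Set.range ρ.s ∪ ρ.p '' B))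
    (hz : z ∈ ρ.monomials C) : g * z ∈ ρ.monomialSpan C := by
  have hp : ∀ T ∈ B, ρ.p T * z ∈ ρ.monomialSpan C := fun T hT => by
    obtain ⟨α, β, S, hS, hSC, rfl⟩ := hz
    rw [ρ.p_mul_monomial hB hS hT]
    exact Submodule.subset_span ⟨α, β, _, hB.inter_mem _ hS _ (hB.relRange'_mem hT α),
      hSC.mono Set.inter_subset_left, rfl⟩
  rcases hg with (⟨a, rfl⟩ | ⟨T, hT, rfl⟩) | hg
  · obtain ⟨α, β, S, hS, hSC, rfl⟩ := hz
    exact Submodule.subset_span ⟨a :: α, β, S, hS, hSC, rfl⟩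
  · exact hp T hT
  · rcases Set.mem_star.mp hg with ⟨a, ha⟩ | ⟨T, hT, hT'⟩
    · rw [← star_star g, ← ha]
      exact star_s_mul_mem_monomialSpan hB a hz
    · rw [← star_star g, ← hT', (ρ.p_proj T hT).1]
      exact hp T hT

lemma mul_mem_monomialSpan (hB : G.Accommodating B) {x y : 𝔄}
    (hx : x ∈ NonUnitalStarAlgebra.adjoin ℂ (Set.range ρ.s ∪ ρ.p '' B))
    (hy : y ∈ ρ.monomialSpan C) : x * y ∈ ρ.monomialSpan C := by
  rw [← NonUnitalStarSubalgebra.mem_toNonUnitalSubalgebra,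
    NonUnitalStarAlgebra.adjoin_toNonUnitalSubalgebra] at hx
  induction hx using NonUnitalAlgebra.adjoin_induction generalizing y with
  | mem g hg =>
    exact (Submodule.span_le (p := (ρ.monomialSpan C).comap (LinearMap.mulLeft ℂ g))).mpr
      (fun z hz => mul_mem_monomialSpan_of_mem_monomials hB hg hz) hy
  | add x₁ x₂ _ _ h₁ h₂ => rw [add_mul]; exact add_mem (h₁ hy) (h₂ hy)
  | zero => rw [zero_mul]; exact zero_mem _
  | mul x₁ x₂ _ _ h₁ h₂ => rw [mul_assoc]; exact h₁ (h₂ hy)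
  | smul c x _ h => rw [smul_mul_assoc]; exact Submodule.smul_mem _ c (h hy)

variable (ρ)

lemma closure_monomialSpan_eq_univ (hB : G.Accommodating B) (hgen : ρ.Generates)
    (hsimple : IsSimpleCStarAlgebra 𝔄) (hC : C ∈ B) (hpC : ρ.p C ≠ 0) :
    closure (ρ.monomialSpan C : Set 𝔄) = Set.univ := by
  obtain ⟨I, hI⟩ := TwoSidedIdeal.exists_coe_eq_closure (dense_iff_closure_eq.mpr hgen)
    (ρ.monomialSpan C).toAddSubgroup (fun _ => star_mem_monomialSpan)
    (fun _ hx _ => mul_mem_monomialSpan hB hx)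
  have hpCI : ρ.p C ∈ (I : Set 𝔄) := hI ▸ subset_closure (Submodule.subset_span
    ⟨[], [], C, hC, G.coveredByRanges_self C, (ρ.p_proj C hC).1.symm⟩)
  rcases hsimple I (hI ▸ isClosed_closure) with h0 | huniv
  · exact absurd (Set.mem_singleton_iff.mp (h0 ▸ hpCI)) hpC
  · exact hI ▸ huniv

lemma exists_finite_words_star_wordMul_mul_eq_zero (hB : G.Accommodating B) {y : 𝔄}
    (hy : y ∈ ρ.monomialSpan C) :
    ∃ n : ℕ, ∀ μ : List A, n < μ.length → ∃ Δ : Set (List A), Δ.Finite ∧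
      ∀ D ∈ B, Disjoint D (⋃ η ∈ Δ, G.relRange C η) → star (ρ.wordMul μ (ρ.p D)) * y = 0 := by
  induction hy using Submodule.span_induction with
  | mem z hz =>
    obtain ⟨α, β, S, hS, ⟨L, hL, hSL⟩, rfl⟩ := hz
    refine ⟨α.length, fun μ hμ =>
      ⟨(· ++ μ.drop α.length) '' L, hL.image _, fun D hD hdisj => ?_⟩⟩
    have hdrop : μ.drop α.length ≠ [] := by simpa [List.drop_eq_nil_iff] using hμ
    refine ρ.star_wordMul_mul_monomial hB hS hD hμ.le (hdisj.mono_right ?_) β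
    refine (G.relRange'_subset_biUnion hSL _).trans ?_
    rw [Set.biUnion_image]
    exact Set.iUnion₂_mono fun δ _ =>
      (G.relRange'_eq_relRange C (List.append_ne_nil_of_right_ne_nil δ hdrop)).subset
  | zero => exact ⟨0, fun _ _ => ⟨∅, Set.finite_empty, fun _ _ _ => mul_zero _⟩⟩
  | add x y _ _ hx hy =>
    obtain ⟨n₁, h₁⟩ := hx
    obtain ⟨n₂, h₂⟩ := hy
    refine ⟨max n₁ n₂, fun μ hμ => ?_⟩
    obtain ⟨Δ₁, hΔ₁, k₁⟩ := h₁ μ ((le_max_left _ _).trans_lt hμ)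
    obtain ⟨Δ₂, hΔ₂, k₂⟩ := h₂ μ ((le_max_right _ _).trans_lt hμ)
    refine ⟨Δ₁ ∪ Δ₂, hΔ₁.union hΔ₂, fun D hD hdisj => ?_⟩
    rw [Set.biUnion_union, Set.disjoint_union_right] at hdisj
    rw [mul_add, k₁ D hD hdisj.1, k₂ D hD hdisj.2, add_zero]
  | smul c x _ hx =>
    obtain ⟨n, h⟩ := hx
    refine ⟨n, fun μ hμ => ?_⟩
    obtain ⟨Δ, hΔ, k⟩ := h μ hμ
    exact ⟨Δ, hΔ, fun D hD hdisj => by rw [mul_smul_comm, k D hD hdisj, smul_zero]⟩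

lemma one_le_norm_p_sub (hB : G.Accommodating B) {W D : Set V} (hW : W ∈ B) (hD : D ∈ B)
    (hpD : ρ.p D ≠ 0) {μ : List A} (hDW : D ⊆ G.relRange' W μ) {y : 𝔄}
    (hy : star (ρ.wordMul μ (ρ.p D)) * y = 0) : 1 ≤ ‖ρ.p W - y‖ := by
  set X := ρ.wordMul μ (ρ.p D)
  have hX : ‖X‖ ≤ 1 := (ρ.norm_wordMul_le hB μ _).trans (ρ.isStarProjection_p hD).norm_le
  have hcompress : ρ.p D = star X * (ρ.p W - y) * X := by
    rw [mul_sub, sub_mul, hy, zero_mul, sub_zero, ρ.star_wordMul_mul_p_mul_wordMul hB hW hD hDW]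
  calc 1 = ‖ρ.p D‖ := (ρ.norm_p_eq_one hD hpD).symm
    _ = ‖star X * (ρ.p W - y) * X‖ := by rw [← hcompress]
    _ ≤ ‖star X‖ * ‖ρ.p W - y‖ * ‖X‖ := norm_mul₃_le
    _ ≤ 1 * ‖ρ.p W - y‖ * 1 := by rw [norm_star]; gcongr
    _ = ‖ρ.p W - y‖ := by ring

end Rep

end LabelledGraph

theorem simple_implies_stronglyCofinal_general
    {V Ed A : Type*} (G : LabelledGraph V Ed A)
    (hacc : G.Accommodating G.barE)
    (𝔄 : Type*) [NonUnitalCStarAlgebra 𝔄]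
    (ρ : G.Rep G.barE 𝔄) (hgen : ρ.Generates)
    (hnz : ∀ S ∈ G.barE, S.Nonempty → ρ.p S ≠ 0)
    (hsimple : IsSimpleCStarAlgebra 𝔄) :
    G.StronglyCofinal := by
  intro x _ l hl v w _
  by_contra hfail
  set C := G.genVertex l v
  set W := G.genVertex 1 w
  have hC : C ∈ G.barE := G.genVertex_mem_barE hl v
  have hW : W ∈ G.barE := G.genVertex_mem_barE le_rfl w
  obtain ⟨y, hy, hyW⟩ : ∃ y ∈ ρ.monomialSpan C, dist (ρ.p W) y < 1 := Metric.mem_closure_iff.mp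
    (ρ.closure_monomialSpan_eq_univ hacc hgen hsimple hC (hnz C hC ⟨v, rfl⟩) ▸ Set.mem_univ _)
    1 one_pos
  obtain ⟨n, hn⟩ := ρ.exists_finite_words_star_wordMul_mul_eq_zero hacc hy
  set μ := finTake x (n + 1)
  have hμ : μ.length = n + 1 := List.length_ofFn
  obtain ⟨Δ, hΔ, hkill⟩ := hn μ (by omega)
  obtain ⟨m, lds, hlab, hcover⟩ := G.exists_fin_labelled_cover C hΔ
  obtain ⟨t, htμ, htlds⟩ := Set.not_subset.mp fun h => hfail ⟨n + 1, by omega, m, lds, hlab, h⟩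
  obtain ⟨k, hk, hDμ, hDΔ⟩ := G.exists_genVertex_subset_disjoint (hacc.relRange_mem' hW μ)
    (hacc.biUnion_mem hΔ fun η _ => hacc.relRange_mem' hC η) htμ fun ht => htlds (hcover ht)
  have hD := G.genVertex_mem_barE hk t
  rw [← G.relRange'_eq_relRange W (List.ne_nil_of_length_pos (by omega))] at hDμ
  rw [dist_eq_norm] at hyW
  exact (ρ.one_le_norm_p_sub hacc hW hD (hnz _ hD ⟨t, rfl⟩) hDμ (hkill _ hD hDΔ)).not_gt hyW

/-- If the C*-algebra generated by a representation of the weakly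
left-resolving labelled space `(E,𝓛,Ē^{0,-})` (with all projections of nonempty
sets nonzero) is simple, then `(E,𝓛,Ē^{0,-})` is strongly cofinal. -/
theorem simple_implies_stronglyCofinal
    {V Ed A : Type*} [Countable A] (G : LabelledGraph V Ed A)
    (hacc : G.Accommodating G.barE)
    (hwlr : G.WeaklyLeftResolving G.barE)
    (hsa : G.StandingAssumptions G.barE)
    (𝔄 : Type*) [NonUnitalCStarAlgebra 𝔄]
    (ρ : G.Rep G.barE 𝔄) (hgen : ρ.Generates)
    (hnz : ∀ S ∈ G.barE, S.Nonempty → ρ.p S ≠ 0)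
    (hsimple : IsSimpleCStarAlgebra 𝔄) :
    G.StronglyCofinal :=
  simple_implies_stronglyCofinal_general G hacc 𝔄 ρ hgen hnz hsimple
end

section
/- Let (E,𝓛,𝓑) be a labelled space and v ∈ E^0. If [v]_k is not disagreeable for some k ≥ 1, then [v]_l is not disagreeable for all l > k. -/
open scoped BigOperators

/-! Raising `l` shrinks `[v]_l` (a path of length at most `k ≤ l` is seen by `∼_l`) and only
enlarges the set of agreeable paths, so every path disagreeable for `[v]_l` is disagreeable
for `[v]_k`. -/

namespace LabelledGraph

variable {V Ed A : Type*} {G : LabelledGraph V Ed A} {k l : ℕ}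

theorem GPath.len_eq_length_label (p : G.GPath) : p.len = p.label.length := by
  simp [GPath.len, GPath.label]

theorem labelsToVtx_eq_of_le (hkl : k ≤ l) (v : V) :
    G.labelsToVtx k v = { α ∈ G.labelsToVtx l v | α.length ≤ k } := by
  ext α
  constructor
  · rintro ⟨p, rfl, hp, hrng⟩
    exact ⟨⟨p, rfl, hp.trans hkl, hrng⟩, p.len_eq_length_label ▸ hp⟩
  · rintro ⟨⟨p, rfl, -, hrng⟩, hα⟩
    exact ⟨p, rfl, p.len_eq_length_label ▸ hα, hrng⟩

theorem genVertex_subset_of_le (hkl : k ≤ l) (v : V) : G.genVertex l v ⊆ G.genVertex k v := by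
  intro w hw
  simp only [genVertex, Set.mem_ofPred_eq, labelsToVtx_eq_of_le hkl] at hw ⊢
  rw [hw]

theorem Agreeable.mono {α : List A} (hkl : k ≤ l) (h : G.Agreeable k α) : G.Agreeable l α :=
  let ⟨β, α', γ, hβ, hα', hγ, hlen, hβk, hpre, hsuf⟩ := h
  ⟨β, α', γ, hβ, hα', hγ, hlen, hβk.trans hkl, hpre, hsuf⟩

theorem DisagreeablePath.anti {v : V} {α : List A} (hkl : k ≤ l)
    (h : G.DisagreeablePath l v α) : G.DisagreeablePath k v α :=
  let ⟨hα, hsrc, hdis⟩ := h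
  ⟨hα, hsrc.mono (Set.inter_subset_inter_right _ (genVertex_subset_of_le hkl v)),
    fun hag => hdis (hag.mono hkl)⟩

theorem DisagreeableVtx.anti {v : V} (hkl : k ≤ l) (h : G.DisagreeableVtx l v) :
    G.DisagreeableVtx k v :=
  let ⟨N, hN, hpaths⟩ := h
  ⟨N, hN, fun n hn =>
    let ⟨α, hlen, hα⟩ := hpaths n hn
    ⟨α, hlen, hα.anti hkl⟩⟩

end LabelledGraph

theorem not_disagreeableVtx_mono_general
    {V Ed A : Type*} (G : LabelledGraph V Ed A)
    (v : V) (k : ℕ)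
    (h : ¬ G.DisagreeableVtx k v) :
    ∀ l : ℕ, k < l → ¬ G.DisagreeableVtx l v :=
  fun _ hkl hl => h (hl.anti hkl.le)

/-- If `[v]_k` is not disagreeable, then `[v]_l` is not disagreeable
for all `l > k`. -/
theorem not_disagreeableVtx_mono
    {V Ed A : Type*} (G : LabelledGraph V Ed A)
    (B : Set (Set V)) (hacc : G.Accommodating B)
    (v : V) (k : ℕ) (hk : 1 ≤ k)
    (h : ¬ G.DisagreeableVtx k v) :
    ∀ l : ℕ, k < l → ¬ G.DisagreeableVtx l v :=
  not_disagreeableVtx_mono_general G v k h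
end

section
/- Let (E,𝓛,𝓑) be a labelled space with E having no sinks, and let v ∈ E^0, l ≥ 1. If [v]_l is not disagreeable, then there exists N > 1 such that every α ∈ 𝓛([v]_l E^{≥N}) is of the form α = β^j β' for some labelled path β ∈ 𝓛(E^{≤l}), some j ≥ 1, and some initial segment β' of β. -/
open scoped BigOperators

/-! Since `[v]_l` is not disagreeable, every long enough labelled path `α` from `[v]_l` is
agreeable: `α = βα' = α'γ` with `|β| ≤ l`. Then `α'` is a prefix of `βα'`, so `α'` has period
`|β|`, and peeling off copies of `β` writes `α` as `β^j β'` with `β'` a nonempty prefix of `β`. -/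

theorem exists_eq_wpow_append_of_prefix_append {A : Type*} {β : List A} (hβ : β ≠ []) :
    ∀ {α' : List A}, α' ≠ [] → α' <+: β ++ α' →
      ∃ (j : ℕ) (β' : List A), β' ≠ [] ∧ β' <+: β ∧ α' = wpow β j ++ β' := by
  intro α'
  induction h : α'.length using Nat.strong_induction_on generalizing α' with
  | _ n ih =>
    intro hα' hpre
    have hβpre : β <+: β ++ α' := List.prefix_append β α'
    by_cases hle : α'.length ≤ β.length
    · exact ⟨0, α', hα', List.prefix_of_prefix_length_le hpre hβpre hle, rfl⟩
    obtain ⟨α'', rfl⟩ := List.prefix_of_prefix_length_le hβpre hpre (by omega)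
    have hα'' : α'' ≠ [] := by
      rintro rfl
      simp at hle
    have hpre'' : α'' <+: β ++ α'' := by
      obtain ⟨t, ht⟩ := hpre
      exact ⟨t, by simpa using ht⟩
    have hlt : α''.length < n := by
      have := List.length_pos_iff.mpr hβ
      simp only [← h, List.length_append]
      omega
    obtain ⟨j, β', hβ', hβ'β, rfl⟩ := ih _ hlt rfl hα'' hpre''
    exact ⟨j + 1, β', hβ', hβ'β, by simp [wpow]⟩

namespace LabelledGraph

variable {V Ed A : Type*} {G : LabelledGraph V Ed A}

theorem GPath.length_label (p : G.GPath) : p.label.length = p.len := by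
  simp [GPath.label, GPath.len]

theorem IsLabelled.ne_nil {α : List A} (h : G.IsLabelled α) : α ≠ [] := by
  obtain ⟨p, rfl⟩ := h
  simpa [GPath.label] using p.ne

theorem Agreeable.exists_eq_wpow_append {l : ℕ} {α : List A} (h : G.Agreeable l α) :
    ∃ (β β' : List A) (j : ℕ), G.IsLabelled β ∧ β.length ≤ l ∧ 1 ≤ j ∧
      β' ≠ [] ∧ β' <+: β ∧ α = wpow β j ++ β' := by
  obtain ⟨β, α', γ, hβ, hα', -, -, hβl, rfl, hα⟩ := h
  have hpre : α' <+: β ++ α' := ⟨γ, hα.symm⟩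
  obtain ⟨j, β', hβ', hβ'β, rfl⟩ :=
    exists_eq_wpow_append_of_prefix_append hβ.ne_nil hα'.ne_nil hpre
  exact ⟨β, β', j + 1, hβ, hβl, by omega, hβ', hβ'β, by simp [wpow]⟩

theorem exists_forall_agreeable_of_not_disagreeableVtx {l : ℕ} {v : V}
    (h : ¬ G.DisagreeableVtx l v) :
    ∃ N : ℕ, 1 < N ∧ ∀ p : G.GPath, p.src ∈ G.genVertex l v → N ≤ p.len →
      G.Agreeable l p.label := by
  simp only [DisagreeableVtx, not_exists, not_and, not_forall] at h
  obtain ⟨N, hN, hshort⟩ := h 1 one_pos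
  refine ⟨N, hN, fun p hp hpN => ?_⟩
  by_contra hdis
  exact hshort p.label (p.length_label ▸ hpN) ⟨⟨p, rfl⟩, ⟨p.src, ⟨p, rfl, rfl⟩, hp⟩, hdis⟩

end LabelledGraph

theorem not_disagreeable_implies_eventually_periodic_general
    {V Ed A : Type*} (G : LabelledGraph V Ed A)
    (v : V) (l : ℕ)
    (h : ¬ G.DisagreeableVtx l v) :
    ∃ N : ℕ, 1 < N ∧ ∀ α : List A,
      (∃ p : G.GPath, p.label = α ∧ p.src ∈ G.genVertex l v ∧ N ≤ p.len) →
      ∃ (β β' : List A) (j : ℕ), G.IsLabelled β ∧ β.length ≤ l ∧ 1 ≤ j ∧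
        β' ≠ [] ∧ β' <+: β ∧ α = wpow β j ++ β' := by
  obtain ⟨N, hN, hagree⟩ := G.exists_forall_agreeable_of_not_disagreeableVtx h
  refine ⟨N, hN, ?_⟩
  rintro α ⟨p, rfl, hp, hpN⟩
  exact (hagree p hp hpN).exists_eq_wpow_append

/-- If `[v]_l` is not disagreeable (and `E` has no sinks), then there
is `N > 1` such that every `α ∈ 𝓛([v]_l E^{≥N})` has the form `β^j β'` with
`β ∈ 𝓛(E^{≤l})`, `j ≥ 1` and `β'` an initial segment of `β`. -/
theorem not_disagreeable_implies_eventually_periodic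
    {V Ed A : Type*} (G : LabelledGraph V Ed A)
    (B : Set (Set V)) (hacc : G.Accommodating B)
    (hns : ∀ v : V, ∃ e : Ed, G.src e = v)
    (v : V) (l : ℕ) (hl : 1 ≤ l)
    (h : ¬ G.DisagreeableVtx l v) :
    ∃ N : ℕ, 1 < N ∧ ∀ α : List A,
      (∃ p : G.GPath, p.label = α ∧ p.src ∈ G.genVertex l v ∧ N ≤ p.len) →
      ∃ (β β' : List A) (j : ℕ), G.IsLabelled β ∧ β.length ≤ l ∧ 1 ≤ j ∧
        β' ≠ [] ∧ β' <+: β ∧ α = wpow β j ++ β' :=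
  not_disagreeable_implies_eventually_periodic_general G v l h
end
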